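/- Let G(n) = ∑_{i=0}^{⌊(n+1)/2⌋} ∑_{j=0}^{i} (-1)^{i-j} · C(n, 2i+1) · C(i, j). For every natural number s ≥ 1, the ratio of partial sums (∑_{n=1}^{k} G(n)^{2s} / ((sin²n) · n^{2s+3})) / (∑_{n=1}^{k} 1 / ((sin²n) · n³)) tends to 1 as k → ∞. In other words, the partial sums of the flint hill series ∑_{n≥1} 1/((sin²n) n³) and of the modified series ∑_{n≥1} G(n)^{2s}/((sin²n) n^{2s+3}) are asymptotically equivalent for every s ≥ 1. -/

import Mathlib

open Filter

/-- `G(n) = ∑_{i=0}^{⌊(n+1)/2⌋} ∑_{j=0}^{i} (-1)^(i-j) C(n,2i+1) C(i,j)`. -/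
def flintG (n : ℕ) : ℤ :=
  ∑ i ∈ Finset.range ((n + 1) / 2 + 1), ∑ j ∈ Finset.range (i + 1),
    (-1 : ℤ) ^ (i - j) * (n.choose (2 * i + 1) : ℤ) * (i.choose j : ℤ)

/-!
The inner sum `∑ⱼ (-1)^(i-j) C(i,j)` is `(1 - 1)^i`, so only `i = 0` contributes and `G(n) = n`.
The two series therefore agree term by term, and the ratio of their partial sums is exactly `1`
as soon as the denominator is nonzero, which it is from `k = 1` on since `sin 1 > 0`.
-/

open Finset

theorem sum_range_neg_one_pow_sub_mul_choose {R : Type*} [CommRing R] (i : ℕ) :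
    ∑ j ∈ range (i + 1), (-1 : R) ^ (i - j) * (i.choose j : R) = 0 ^ i := by
  simpa [mul_comm] using ((add_pow (1 : R) (-1) i).symm.trans (by rw [add_neg_cancel]))

theorem flintG_eq_self (n : ℕ) : flintG n = n := by
  simp_rw [flintG, mul_right_comm _ (n.choose _ : ℤ), ← sum_mul,
    sum_range_neg_one_pow_sub_mul_choose]
  rw [sum_eq_single 0 (fun i _ hi => by simp [hi]) (by simp)]
  simp

theorem sum_Icc_one_div_sin_sq_mul_pow_pos (m : ℕ) {k : ℕ} (hk : 1 ≤ k) :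
    0 < ∑ n ∈ Icc 1 k, 1 / (Real.sin n ^ 2 * (n : ℝ) ^ m) := by
  have hsin_one : 0 < Real.sin 1 :=
    Real.sin_pos_of_pos_of_lt_pi one_pos (by linarith [Real.pi_gt_three])
  refine sum_pos' (fun n _ => by positivity) ⟨1, mem_Icc.mpr ⟨le_rfl, hk⟩, ?_⟩
  simpa using pow_pos hsin_one 2

theorem flint_hill_partial_sums_asymptotic_general (s : ℕ) :
    Tendsto
      (fun k : ℕ =>
        (∑ n ∈ Finset.Icc 1 k, (flintG n : ℝ) ^ (2 * s) / (Real.sin n ^ 2 * (n : ℝ) ^ (2 * s + 3))) /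
          (∑ n ∈ Finset.Icc 1 k, 1 / (Real.sin n ^ 2 * (n : ℝ) ^ 3)))
      atTop (nhds 1) := by
  have hterm : ∀ n : ℕ, 1 ≤ n →
      (flintG n : ℝ) ^ (2 * s) / (Real.sin n ^ 2 * (n : ℝ) ^ (2 * s + 3)) =
        1 / (Real.sin n ^ 2 * (n : ℝ) ^ 3) := by
    intro n hn
    have hn0 : (n : ℝ) ≠ 0 := by positivity
    rw [flintG_eq_self, Int.cast_natCast, pow_add]
    field_simp
  refine tendsto_const_nhds.congr' ?_
  filter_upwards [eventually_ge_atTop 1] with k hk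
  rw [sum_congr rfl fun n hn => hterm n (mem_Icc.mp hn).1,
    div_self (sum_Icc_one_div_sin_sq_mul_pow_pos 3 hk).ne']

/-- The partial sums of the flint hill series and of the modified series
`∑ G(n)^(2s)/((sin² n) n^(2s+3))` are asymptotically equivalent for every `s ≥ 1`. -/
theorem flint_hill_partial_sums_asymptotic (s : ℕ) (hs : 1 ≤ s) :
    Tendsto
      (fun k : ℕ =>
        (∑ n ∈ Finset.Icc 1 k, (flintG n : ℝ) ^ (2 * s) / (Real.sin n ^ 2 * (n : ℝ) ^ (2 * s + 3))) /
          (∑ n ∈ Finset.Icc 1 k, 1 / (Real.sin n ^ 2 * (n : ℝ) ^ 3)))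
      atTop (nhds 1) :=
  flint_hill_partial_sums_asymptotic_general s
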